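/- arXiv:math-ph/0402060 — 2 statements merged into one kernel-verified Lean document; each statement's English description precedes it below -/
import Mathlib

section
/- Let P be a groupoid, G a group, and let (L_i)_{i ∈ I} be a family of subgroupoids of P that is directed under inclusion (for any i, j ∈ I there is k ∈ I with L_i ⊆ L_k and L_j ⊆ L_k) and such that every morphism of P belongs to some L_i. Then the map Φ sending each generalized connection Ā ∈ Hom[P,G] to the family of its restrictions (Ā|_{L_i})_{i ∈ I} is a bijection from Hom[P,G] onto the projective limit, i.e. onto the set of families (A_i)_{i∈I} with A_i ∈ Hom[L_i,G] such that whenever L_i ⊆ L_j the restriction of A_j to the morphisms of L_i equals A_i. -/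
open CategoryTheory

/-- Let `P` be a groupoid, `G` a group and `(L i)_{i : ι}` a family of
subgroupoids of `P`, directed under inclusion, such that every morphism of `P` lies in some
`L i`. Then the restriction map `Φ` is a bijection from `Hom[P,G]` onto the projective
limit of the sets `Hom[L i, G]`. -/
theorem generalizedConnections_bijective_projectiveLimit
    {P : Type*} [Groupoid P] {G : Type*} [Group G]
    {ι : Type*} (L : ι → Subgroupoid P)
    (hdir : ∀ i j : ι, ∃ k : ι, L i ≤ L k ∧ L j ≤ L k)
    (hcov : ∀ (x y : P) (p : x ⟶ y), ∃ i : ι, p ∈ (L i).arrows x y) :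
    Function.Bijective
      (fun (A : {A : ∀ (x y : P), (x ⟶ y) → G //
          ∀ (x y z : P) (p : x ⟶ y) (p' : y ⟶ z), A x z (p ≫ p') = A y z p' * A x y p}) =>
        (⟨fun i =>
            ⟨fun x y p _ => A.1 x y p, fun x y z p p' _ _ => A.2 x y z p p'⟩,
          fun _ _ _ _ _ _ _ => rfl⟩ :
          {B : ∀ i : ι, {Bi : ∀ (x y : P) (p : x ⟶ y), p ∈ (L i).arrows x y → G //
              ∀ (x y z : P) (p : x ⟶ y) (p' : y ⟶ z) (hp : p ∈ (L i).arrows x y)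
                (hp' : p' ∈ (L i).arrows y z),
                Bi x z (p ≫ p') ((L i).mul hp hp') = Bi y z p' hp' * Bi x y p hp} //
            ∀ (i j : ι) (hij : L i ≤ L j) (x y : P) (p : x ⟶ y)
              (hp : p ∈ (L i).arrows x y),
              (B j).1 x y p ((Subgroupoid.le_iff (L i) (L j)).mp hij hp) =
                (B i).1 x y p hp})) := by

  constructor
  · rintro ⟨A, hA⟩ ⟨A', hA'⟩ h
    have h1 := congrArg Subtype.val h
    ext x y p
    obtain ⟨i, hi⟩ := hcov x y p
    have := congrFun h1 i
    have h2 := congrArg Subtype.val this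
    exact congrFun (congrFun (congrFun (congrFun h2 x) y) p) hi
  · rintro ⟨B, hB⟩
    have key : ∀ (x y : P) (p : x ⟶ y) (i j : ι) (hi : p ∈ (L i).arrows x y)
        (hj : p ∈ (L j).arrows x y), (B i).1 x y p hi = (B j).1 x y p hj := by
      intro x y p i j hi hj
      obtain ⟨k, hik, hjk⟩ := hdir i j
      rw [← hB i k hik x y p hi, ← hB j k hjk x y p hj]
    choose ind hind using hcov
    refine ⟨⟨fun x y p => (B (ind x y p)).1 x y p (hind x y p), ?_⟩, ?_⟩
    · intro x y z p p'
      dsimp only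
      obtain ⟨k, h1, h2⟩ := hdir (ind x y p) (ind y z p')
      have hpk : p ∈ (L k).arrows x y :=
        (Subgroupoid.le_iff _ _).mp h1 (hind x y p)
      have hpk' : p' ∈ (L k).arrows y z :=
        (Subgroupoid.le_iff _ _).mp h2 (hind y z p')
      rw [key x z (p ≫ p') _ k (hind x z (p ≫ p')) ((L k).mul hpk hpk'),
        key x y p _ k (hind x y p) hpk, key y z p' _ k (hind y z p') hpk',
        (B k).2 x y z p p' hpk hpk']
    · apply Subtype.ext
      funext i
      apply Subtype.ext
      funext x y p hp
      exact key x y p (ind x y p) i (hind x y p) hp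
end

section
/- Let (I, ≤) be a directed partially ordered set, for each i ∈ I let X_i be a nonempty compact Hausdorff space, and for i ≤ j let p_{ij} : X_j → X_i be continuous surjections satisfying p_{ik} = p_{ij} ∘ p_{jk} for all i ≤ j ≤ k. Let X∞ be the projective limit with canonical projections p_i : X∞ → X_i, and assume each p_i is surjective. Given for each i ∈ I a regular Borel probability measure μ_i on X_i forming a consistent family, i.e. (p_{ij})_* μ_j = μ_i whenever i ≤ j, there exists a regular Borel probability measure μ on X∞ such that (p_i)_* μ = μ_i for every i ∈ I. -/
open MeasureTheory Set TopologicalSpace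
open scoped ENNReal NNReal

namespace PLimAux

variable {I : Type*} [Preorder I]
variable {X : I → Type*} [∀ i, TopologicalSpace (X i)]
variable (p : ∀ ⦃i j : I⦄, i ≤ j → X j → X i)

/-- The projective limit as a subtype. -/
abbrev PL := {x : ∀ i, X i // ∀ (i j : I) (h : i ≤ j), p h (x j) = x i}

variable {p}

lemma continuous_proj (i : I) : Continuous (fun x : PL p => x.1 i) :=
  (continuous_apply i).comp continuous_subtype_val

lemma compactSpace_PL [∀ i, CompactSpace (X i)] [∀ i, T2Space (X i)]
    (hcont : ∀ (i j : I) (h : i ≤ j), Continuous (p h)) : CompactSpace (PL p) := by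
  have hc : IsClosed {x : ∀ i, X i | ∀ (i j : I) (h : i ≤ j), p h (x j) = x i} := by
    have : {x : ∀ i, X i | ∀ (i j : I) (h : i ≤ j), p h (x j) = x i} =
        ⋂ (i : I), ⋂ (j : I), ⋂ (h : i ≤ j), {x : ∀ i, X i | p h (x j) = x i} := by
      ext x; simp [Set.mem_iInter]
    rw [this]
    exact isClosed_iInter fun i => isClosed_iInter fun j => isClosed_iInter fun h =>
      isClosed_eq ((hcont i j h).comp (continuous_apply j)) (continuous_apply i)
  exact isCompact_iff_compactSpace.mp hc.isCompact

lemma exists_proj_not_mem [∀ i, T2Space (X i)] [Nonempty I] [IsDirected I (· ≤ ·)]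
    {K : Set (PL p)} (hK : IsCompact K) {x : PL p} (hx : x ∉ K) :
    ∃ j : I, x.1 j ∉ (fun y : PL p => y.1 j) '' K := by
  classical
  have key : ∀ y : PL p, y ∈ K →
      ∃ (i : I) (W : Set (X i)), IsOpen W ∧ y.1 i ∈ W ∧ x.1 i ∉ W := by
    intro y hy
    have hxy : ∃ i, y.1 i ≠ x.1 i := by
      by_contra h
      push_neg at h
      exact hx (by rwa [show x = y from Subtype.ext (funext fun i => (h i).symm)])
    obtain ⟨i, hi⟩ := hxy
    obtain ⟨W, hW, hyW, hxW⟩ := t1Space_iff_exists_open.mp inferInstance hi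
    exact ⟨i, W, hW, hyW, hxW⟩
  choose! idx W hWo hyW hxW using key
  obtain ⟨t, ht⟩ := hK.elim_finite_subcover
      (fun y : K => {z : PL p | z.1 (idx y.1) ∈ W y.1})
      (fun y => (hWo y.1 y.2).preimage (continuous_proj (idx y.1)))
      (fun z hz => Set.mem_iUnion.mpr ⟨⟨z, hz⟩, hyW z hz⟩)
  obtain ⟨j, hj⟩ := (t.image (fun y : K => idx y.1)).exists_le
  refine ⟨j, ?_⟩
  rintro ⟨y, hyK, hyx⟩
  obtain ⟨y₀, hy₀t, hyW₀⟩ := Set.mem_iUnion₂.mp (ht hyK)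
  have h0 : idx y₀.1 ≤ j := hj _ (Finset.mem_image_of_mem _ hy₀t)
  have : x.1 (idx y₀.1) = y.1 (idx y₀.1) := by
    rw [← x.2 (idx y₀.1) j h0, ← y.2 (idx y₀.1) j h0]; exact congrArg _ hyx.symm
  exact hxW y₀.1 y₀.2 (this ▸ hyW₀)

lemma exists_stage_disjoint [∀ i, CompactSpace (X i)] [∀ i, T2Space (X i)] [Nonempty I]
    [IsDirected I (· ≤ ·)]
    (hcont : ∀ (i j : I) (h : i ≤ j), Continuous (p h))
    (hproj : ∀ i : I, Function.Surjective (fun x : PL p => x.1 i))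
    {K₁ K₂ : Set (PL p)} (h₁ : IsCompact K₁) (h₂ : IsCompact K₂) (hd : Disjoint K₁ K₂) :
    ∃ j : I, Disjoint ((fun y : PL p => y.1 j) '' K₁) ((fun y : PL p => y.1 j) '' K₂) := by
  haveI := compactSpace_PL (p := p) hcont
  by_contra hall
  push_neg at hall
  set Z : I → Set (PL p) := fun j =>
    (fun y : PL p => y.1 j) ⁻¹' ((fun y : PL p => y.1 j) '' K₁) ∩
    (fun y : PL p => y.1 j) ⁻¹' ((fun y : PL p => y.1 j) '' K₂) with hZ
  have hZclosed : ∀ j, IsClosed (Z j) := fun j =>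
    (((h₁.image (continuous_proj j)).isClosed).preimage (continuous_proj j)).inter
      (((h₂.image (continuous_proj j)).isClosed).preimage (continuous_proj j))
  have hZne : ∀ j, (Z j).Nonempty := by
    intro j
    obtain ⟨z, hz1, hz2⟩ := Set.not_disjoint_iff.mp (hall j)
    obtain ⟨x, hxz⟩ := hproj j z
    exact ⟨x, ⟨by simpa [hxz] using hz1, by simpa [hxz] using hz2⟩⟩
  have hanti : ∀ {j k : I}, j ≤ k → Z k ⊆ Z j := by
    intro j k h x hx
    obtain ⟨⟨y₁, hy₁, hy₁x⟩, ⟨y₂, hy₂, hy₂x⟩⟩ := hx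
    constructor
    · exact ⟨y₁, hy₁, by simp only; rw [← x.2 j k h, ← y₁.2 j k h]; exact congrArg _ hy₁x⟩
    · exact ⟨y₂, hy₂, by simp only; rw [← x.2 j k h, ← y₂.2 j k h]; exact congrArg _ hy₂x⟩
  have hdir : Directed (· ⊇ ·) Z := fun j k => by
    obtain ⟨l, hjl, hkl⟩ := directed_of (· ≤ ·) j k
    exact ⟨l, hanti hjl, hanti hkl⟩
  obtain ⟨x, hx⟩ := IsCompact.nonempty_iInter_of_directed_nonempty_isCompact_isClosed Z hdir
    hZne (fun j => (hZclosed j).isCompact) hZclosed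
  have hx1 : x ∈ K₁ := by
    by_contra h
    obtain ⟨j, hj⟩ := exists_proj_not_mem h₁ h
    exact hj (Set.mem_iInter.mp hx j).1
  have hx2 : x ∈ K₂ := by
    by_contra h
    obtain ⟨j, hj⟩ := exists_proj_not_mem h₂ h
    exact hj (Set.mem_iInter.mp hx j).2
  exact Set.disjoint_left.mp hd hx1 hx2

lemma regular_of_subsingleton {α : Type*} [TopologicalSpace α] [MeasurableSpace α]
    [Subsingleton α] (ν : Measure α) [IsFiniteMeasure ν] : ν.Regular := by
  have hopen : ∀ s : Set α, IsOpen s := by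
    intro s
    rcases s.eq_empty_or_nonempty with rfl | ⟨a, ha⟩
    · exact isOpen_empty
    · have : s = univ := Set.eq_univ_of_forall fun b => Subsingleton.elim a b ▸ ha
      rw [this]; exact isOpen_univ
  haveI : ν.OuterRegular := ⟨fun A _ r hr => ⟨A, Set.Subset.rfl, hopen A, hr⟩⟩
  exact ⟨fun U _ r hr =>
    ⟨U, Set.Subset.rfl, (Set.subsingleton_of_subsingleton).isCompact, hr⟩⟩

end PLimAux
open PLimAux

/-- Let `(I, ≤)` be directed, `(X i)` nonempty compact Hausdorff spaces
with continuous surjective bonding maps `p_{ij} : X j → X i` (`i ≤ j`) satisfying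
`p_{ik} = p_{ij} ∘ p_{jk}`, let `X∞` be the projective limit with canonical projections
`p_i`, assumed surjective. Given a consistent family of regular Borel probability measures
`μ i` on `X i` (i.e. `(p_{ij})_* (μ j) = μ i`), there exists a regular Borel probability
measure `ν` on `X∞` with `(p_i)_* ν = μ i` for all `i`. -/
theorem projectiveLimit_consistent_measures_exist
    {I : Type*} [Preorder I] [IsDirected I (· ≤ ·)]
    (X : I → Type*) [∀ i, TopologicalSpace (X i)] [∀ i, CompactSpace (X i)]
    [∀ i, T2Space (X i)] [∀ i, Nonempty (X i)]
    [∀ i, MeasurableSpace (X i)] [∀ i, BorelSpace (X i)]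
    (p : ∀ ⦃i j : I⦄, i ≤ j → X j → X i)
    (hcont : ∀ (i j : I) (h : i ≤ j), Continuous (p h))
    (hsurj : ∀ (i j : I) (h : i ≤ j), Function.Surjective (p h))
    (hcomp : ∀ (i j k : I) (hij : i ≤ j) (hjk : j ≤ k),
      p (hij.trans hjk) = p hij ∘ p hjk)
    (hproj : ∀ i : I, Function.Surjective
      (fun x : {x : ∀ i, X i // ∀ (i j : I) (h : i ≤ j), p h (x j) = x i} => x.1 i))
    (μ : ∀ i, Measure (X i)) [∀ i, IsProbabilityMeasure (μ i)]
    (hreg : ∀ i, (μ i).Regular)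
    (hconsist : ∀ (i j : I) (h : i ≤ j), Measure.map (p h) (μ j) = μ i) :
    ∃ ν : @Measure {x : ∀ i, X i // ∀ (i j : I) (h : i ≤ j), p h (x j) = x i}
        (borel {x : ∀ i, X i // ∀ (i j : I) (h : i ≤ j), p h (x j) = x i}),
      @IsProbabilityMeasure _
          (borel {x : ∀ i, X i // ∀ (i j : I) (h : i ≤ j), p h (x j) = x i}) ν ∧
        @Measure.Regular _
          (borel {x : ∀ i, X i // ∀ (i j : I) (h : i ≤ j), p h (x j) = x i}) _ ν ∧
        ∀ i : I,
          @Measure.map _ _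
              (borel {x : ∀ i, X i // ∀ (i j : I) (h : i ≤ j), p h (x j) = x i}) _
              (fun x => x.1 i) ν = μ i := by
  classical
  letI : MeasurableSpace (PL p) := borel _
  haveI : BorelSpace (PL p) := ⟨rfl⟩
  by_cases hI : Nonempty I
  swap
  · -- degenerate case: `I` empty
    haveI : IsEmpty I := not_nonempty_iff.mp hI
    haveI : Subsingleton (PL p) :=
      ⟨fun a b => Subtype.ext (funext fun i => (IsEmpty.false i).elim)⟩
    have x₀ : PL p := ⟨fun i => (IsEmpty.false i).elim, fun i => (IsEmpty.false i).elim⟩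
    refine ⟨Measure.dirac x₀, inferInstance, regular_of_subsingleton _,
      fun i => (IsEmpty.false i).elim⟩
  haveI : Nonempty I := hI
  haveI : CompactSpace (PL p) := compactSpace_PL (p := p) hcont
  -- the set-function on subsets of the projective limit
  set Λ : Set (PL p) → ℝ≥0∞ := fun K =>
    ⨅ q : {q : Σ j : I, Set (X j) // IsOpen q.2 ∧ K ⊆ (fun x : PL p => x.1 q.1) ⁻¹' q.2},
      μ q.1.1 q.1.2 with hΛdef
  obtain ⟨i₀⟩ := hI
  have hΛle : ∀ (K : Set (PL p)) (i : I) (U : Set (X i)), IsOpen U →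
      K ⊆ (fun x : PL p => x.1 i) ⁻¹' U → Λ K ≤ μ i U := by
    intro K i U hU hKU
    simp only [hΛdef]
    exact iInf_le _ (⟨⟨i, U⟩, hU, hKU⟩ :
      {q : Σ j : I, Set (X j) // IsOpen q.2 ∧ K ⊆ (fun x : PL p => x.1 q.1) ⁻¹' q.2})
  have hΛ1 : ∀ K : Set (PL p), Λ K ≤ 1 := by
    intro K
    have := hΛle K i₀ Set.univ isOpen_univ (by simp)
    simpa using this
  have hΛtop : ∀ K : Set (PL p), Λ K ≠ ⊤ :=
    fun K => ((hΛ1 K).trans_lt ENNReal.one_lt_top).ne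
  have hmono : ∀ {K₁ K₂ : Set (PL p)}, K₁ ⊆ K₂ → Λ K₁ ≤ Λ K₂ := by
    intro K₁ K₂ h
    exact le_iInf fun q => iInf_le_of_le ⟨q.1, q.2.1, h.trans q.2.2⟩ le_rfl
  -- lower bound on preimages of compacts
  have hlower : ∀ (i : I) (C : Set (X i)), IsCompact C →
      μ i C ≤ Λ ((fun x : PL p => x.1 i) ⁻¹' C) := by
    intro i C hC
    refine le_iInf ?_
    rintro ⟨⟨j, V⟩, hV, hsub⟩
    obtain ⟨k, hik, hjk⟩ := directed_of (· ≤ ·) i j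
    have h1 : μ i C = μ k (p hik ⁻¹' C) := by
      rw [← hconsist i k hik,
        Measure.map_apply (hcont i k hik).measurable hC.isClosed.measurableSet]
    have h2 : μ j V = μ k (p hjk ⁻¹' V) := by
      rw [← hconsist j k hjk,
        Measure.map_apply (hcont j k hjk).measurable hV.measurableSet]
    rw [h1]
    refine le_trans (measure_mono ?_) h2.ge
    intro z hz
    obtain ⟨x, hxz⟩ := hproj k z
    have hxi : x.1 i = p hik z := by rw [← hxz]; exact (x.2 i k hik).symm
    have hxC : x ∈ (fun x : PL p => x.1 i) ⁻¹' C := by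
      simp only [Set.mem_preimage] at hz ⊢
      rw [hxi]; exact hz
    have hxV : x.1 j ∈ V := hsub hxC
    have hxj : x.1 j = p hjk z := by rw [← hxz]; exact (x.2 j k hjk).symm
    simpa [Set.mem_preimage, ← hxj] using hxV
  -- subadditivity
  have hsubadd : ∀ K₁ K₂ : Set (PL p), Λ (K₁ ∪ K₂) ≤ Λ K₁ + Λ K₂ := by
    intro K₁ K₂
    rw [hΛdef]
    simp only
    rw [ENNReal.iInf_add]
    refine le_iInf ?_
    rintro ⟨⟨j₁, V₁⟩, hV₁, hs₁⟩
    rw [ENNReal.add_iInf]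
    refine le_iInf ?_
    rintro ⟨⟨j₂, V₂⟩, hV₂, hs₂⟩
    obtain ⟨k, h1k, h2k⟩ := directed_of (· ≤ ·) j₁ j₂
    have hVopen : IsOpen (p h1k ⁻¹' V₁ ∪ p h2k ⁻¹' V₂) :=
      (hV₁.preimage (hcont _ _ h1k)).union (hV₂.preimage (hcont _ _ h2k))
    have hsub : K₁ ∪ K₂ ⊆ (fun x : PL p => x.1 k) ⁻¹' (p h1k ⁻¹' V₁ ∪ p h2k ⁻¹' V₂) := by
      rintro x (hx | hx)
      · have h' : p h1k (x.1 k) ∈ V₁ := by rw [x.2 j₁ k h1k]; exact hs₁ hx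
        exact Set.mem_preimage.mpr (Set.mem_union_left _ h')
      · have h' : p h2k (x.1 k) ∈ V₂ := by rw [x.2 j₂ k h2k]; exact hs₂ hx
        exact Set.mem_preimage.mpr (Set.mem_union_right _ h')
    calc Λ (K₁ ∪ K₂) ≤ μ k (p h1k ⁻¹' V₁ ∪ p h2k ⁻¹' V₂) := hΛle _ k _ hVopen hsub
      _ ≤ μ k (p h1k ⁻¹' V₁) + μ k (p h2k ⁻¹' V₂) := measure_union_le _ _
      _ = μ j₁ V₁ + μ j₂ V₂ := by
          rw [← hconsist j₁ k h1k, ← hconsist j₂ k h2k,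
            Measure.map_apply (hcont _ _ h1k).measurable hV₁.measurableSet,
            Measure.map_apply (hcont _ _ h2k).measurable hV₂.measurableSet]
  -- superadditivity on disjoint compacts
  have hsuperadd : ∀ K₁ K₂ : Set (PL p), IsCompact K₁ → IsCompact K₂ → Disjoint K₁ K₂ →
      Λ K₁ + Λ K₂ ≤ Λ (K₁ ∪ K₂) := by
    intro K₁ K₂ h₁ h₂ hd
    obtain ⟨j, hdisj⟩ := exists_stage_disjoint hcont hproj h₁ h₂ hd
    obtain ⟨U₁, U₂, hU₁, hU₂, hs₁, hs₂, hUd⟩ :=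
      SeparatedNhds.of_isCompact_isCompact (h₁.image (continuous_proj j))
        (h₂.image (continuous_proj j)) hdisj
    refine le_iInf ?_
    rintro ⟨⟨i, U⟩, hU, hsub⟩
    obtain ⟨k, hik, hjk⟩ := directed_of (· ≤ ·) i j
    set W₁ : Set (X k) := p hik ⁻¹' U ∩ p hjk ⁻¹' U₁ with hW₁
    set W₂ : Set (X k) := p hik ⁻¹' U ∩ p hjk ⁻¹' U₂ with hW₂
    have hW₁o : IsOpen W₁ := (hU.preimage (hcont _ _ hik)).inter (hU₁.preimage (hcont _ _ hjk))
    have hW₂o : IsOpen W₂ := (hU.preimage (hcont _ _ hik)).inter (hU₂.preimage (hcont _ _ hjk))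
    have hKW : ∀ (K : Set (PL p)) (U' : Set (X j)) (W : Set (X k)),
        W = p hik ⁻¹' U ∩ p hjk ⁻¹' U' → K ⊆ K₁ ∪ K₂ →
        ((fun y : PL p => y.1 j) '' K ⊆ U') → K ⊆ (fun x : PL p => x.1 k) ⁻¹' W := by
      intro K U' W hW hKK hKU' x hx
      simp only [Set.mem_preimage, hW, Set.mem_inter_iff]
      constructor
      · rw [x.2 i k hik]; exact hsub (hKK hx)
      · rw [x.2 j k hjk]; exact hKU' (Set.mem_image_of_mem _ hx)
    have hle₁ : Λ K₁ ≤ μ k W₁ :=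
      hΛle _ k _ hW₁o (hKW K₁ U₁ W₁ hW₁ Set.subset_union_left hs₁)
    have hle₂ : Λ K₂ ≤ μ k W₂ :=
      hΛle _ k _ hW₂o (hKW K₂ U₂ W₂ hW₂ Set.subset_union_right hs₂)
    have hWd : Disjoint W₁ W₂ :=
      ((hUd.preimage (p hjk)).mono Set.inter_subset_right Set.inter_subset_right)
    calc Λ K₁ + Λ K₂ ≤ μ k W₁ + μ k W₂ := add_le_add hle₁ hle₂
      _ = μ k (W₁ ∪ W₂) := (measure_union hWd hW₂o.measurableSet).symm
      _ ≤ μ k (p hik ⁻¹' U) := measure_mono (by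
          rw [hW₁, hW₂, ← Set.inter_union_distrib_left]
          exact Set.inter_subset_left)
      _ = μ i U := by
          rw [← hconsist i k hik,
            Measure.map_apply (hcont _ _ hik).measurable hU.measurableSet]
  -- the content
  let κ : Content (PL p) :=
    { toFun := fun K => (Λ K).toNNReal
      mono' := fun K₁ K₂ h => ENNReal.toNNReal_mono (hΛtop _) (hmono h)
      sup_disjoint' := by
        intro K₁ K₂ hd h₁ h₂
        have : Λ (↑K₁ ∪ ↑K₂) = Λ ↑K₁ + Λ ↑K₂ :=
          le_antisymm (hsubadd _ _) (hsuperadd _ _ K₁.2 K₂.2 hd)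
        simp only [Compacts.coe_sup]
        rw [this, ENNReal.toNNReal_add (hΛtop _) (hΛtop _)]
      sup_le' := by
        intro K₁ K₂
        have h := hsubadd (↑K₁) (↑K₂)
        have := ENNReal.toNNReal_mono (ENNReal.add_ne_top.mpr ⟨hΛtop _, hΛtop _⟩) h
        rw [ENNReal.toNNReal_add (hΛtop _) (hΛtop _)] at this
        simpa [Compacts.coe_sup] using this }
  have hκ : ∀ K : Compacts (PL p), (κ K : ℝ≥0∞) = Λ ↑K := by
    intro K
    exact ENNReal.coe_toNNReal (hΛtop _)
  set ν := κ.measure with hν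
  -- marginal of ν on open sets
  have hν_open : ∀ (i : I) (U : Set (X i)), IsOpen U →
      ν ((fun x : PL p => x.1 i) ⁻¹' U) = μ i U := by
    intro i U hU
    have hUo : IsOpen ((fun x : PL p => x.1 i) ⁻¹' U) := hU.preimage (continuous_proj i)
    rw [hν, Content.measure_apply _ hUo.measurableSet, κ.outerMeasure_of_isOpen _ hUo]
    refine le_antisymm ?_ ?_
    · refine iSup₂_le fun K hK => ?_
      rw [hκ K]
      exact hΛle _ i U hU hK
    · refine le_of_forall_lt fun r hr => ?_
      obtain ⟨C, hCU, hCc, hrC⟩ := (hreg i).innerRegular hU r hr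
      have hKc : IsCompact ((fun x : PL p => x.1 i) ⁻¹' C) :=
        (hCc.isClosed.preimage (continuous_proj i)).isCompact
      have hlt : (r : ℝ≥0∞) < (κ ⟨_, hKc⟩ : ℝ≥0∞) := by
        rw [hκ]
        exact hrC.trans_le (hlower i C hCc)
      exact hlt.trans_le (le_iSup₂ (f := fun (K : Compacts (PL p))
        (_ : (K : Set (PL p)) ⊆ (fun x : PL p => x.1 i) ⁻¹' U) => (κ K : ℝ≥0∞))
        ⟨_, hKc⟩ (Set.preimage_mono hCU))
  haveI : IsProbabilityMeasure ν := by
    constructor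
    have := hν_open i₀ Set.univ isOpen_univ
    simpa using this
  have hmap : ∀ i : I, Measure.map (fun x : PL p => x.1 i) ν = μ i := by
    intro i
    have hm : Measurable (fun x : PL p => x.1 i) := (continuous_proj i).measurable
    haveI : IsFiniteMeasure (Measure.map (fun x : PL p => x.1 i) ν) := by
      constructor
      rw [Measure.map_apply hm MeasurableSet.univ]
      exact (measure_lt_top ν _)
    refine ext_of_generate_finite {s : Set (X i) | IsOpen s} ?_ isPiSystem_isOpen ?_ ?_
    · exact BorelSpace.measurable_eq
    · intro s hs
      rw [Measure.map_apply hm hs.measurableSet, hν_open i s hs]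
    · rw [Measure.map_apply hm MeasurableSet.univ]
      simp
  exact ⟨ν, inferInstance, inferInstance, hmap⟩
end
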